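/- arXiv:1703.01142 — 3 statements merged into one kernel-verified Lean document; each statement's English description precedes it below -/
import Mathlib

section
/- Let G be a simple connected graph on n vertices with symmetric normalized Laplacian 𝓛, and define the Rényi-2 entropy H₂(G) = -log(Tr((𝓛/n)²)). Then H₂(G) ≥ log(n² / (n + Σ_i 1/√(d_i))). -/
/-!
On a graph without isolated vertices `(𝓛 𝓛)ᵢᵢ = 1 + ∑_{j ∼ i} 1 / (dᵢ dⱼ)`, so
`Tr 𝓛² = n + ∑_{i ∼ j} 1 / (dᵢ dⱼ)`. By AM-GM, `1 / (dᵢ dⱼ) ≤ (1 / dᵢ² + 1 / dⱼ²) / 2`, and summing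
over ordered adjacent pairs bounds the double sum by `∑ᵢ dᵢ / dᵢ² = ∑ᵢ 1 / dᵢ ≤ ∑ᵢ 1 / √dᵢ`.
Since `Tr ρ² = Tr 𝓛² / n²`, the bound on `H₂` follows by monotonicity of `log`.
-/

open Real BigOperators Finset Matrix SimpleGraph

noncomputable def nLap {V : Type*} [Fintype V] [DecidableEq V]
    (G : SimpleGraph V) [DecidableRel G.Adj] : Matrix V V ℝ :=
  Matrix.diagonal (fun v => 1 / Real.sqrt (G.degree v : ℝ)) *
    (Matrix.diagonal (fun v => (G.degree v : ℝ)) - G.adjMatrix ℝ) *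
    Matrix.diagonal (fun v => 1 / Real.sqrt (G.degree v : ℝ))

lemma inv_natCast_le_inv_sqrt_natCast (k : ℕ) : (k : ℝ)⁻¹ ≤ (√(k : ℝ))⁻¹ := by
  rcases k.eq_zero_or_pos with rfl | hk
  · simp
  · exact inv_anti₀ (Real.sqrt_pos.2 (by positivity))
      (Real.sqrt_le_self_iff.2 (Or.inr (by exact_mod_cast hk)))

namespace SimpleGraph

variable {V : Type*} [Fintype V]

lemma sum_adj_inv_degree_mul_le (G : SimpleGraph V) [DecidableRel G.Adj] :
    ∑ i, ∑ j, (if G.Adj i j then ((G.degree i : ℝ) * G.degree j)⁻¹ else 0) ≤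
      ∑ i, (G.degree i : ℝ)⁻¹ := by
  set d : V → ℝ := fun v => G.degree v
  have hamgm : ∀ i j, 2 * (if G.Adj i j then (d i * d j)⁻¹ else 0) ≤
      (if G.Adj i j then (d i)⁻¹ ^ 2 else 0) + if G.Adj i j then (d j)⁻¹ ^ 2 else 0 := by
    intro i j
    split_ifs
    · rw [mul_inv, ← mul_assoc]; exact two_mul_le_add_sq _ _
    · simp
  have hswap : ∑ i, ∑ j, (if G.Adj i j then (d j)⁻¹ ^ 2 else 0) =
      ∑ i, ∑ j, if G.Adj i j then (d i)⁻¹ ^ 2 else 0 := by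
    rw [Finset.sum_comm]; simp only [adj_comm]
  have hrow : ∀ i, ∑ j, (if G.Adj i j then (d i)⁻¹ ^ 2 else 0) = (d i)⁻¹ := fun i => by
    rw [← Finset.sum_filter, sum_const, ← neighborFinset_eq_filter, card_neighborFinset_eq_degree,
      nsmul_eq_mul]
    change d i * _ = _
    rcases eq_or_ne (d i) 0 with h | h
    · simp [h]
    · field_simp
  have : 2 * ∑ i, ∑ j, (if G.Adj i j then (d i * d j)⁻¹ else 0) ≤ 2 * ∑ i, (d i)⁻¹ :=
    calc _ = ∑ i, ∑ j, 2 * (if G.Adj i j then (d i * d j)⁻¹ else 0) := by simp only [mul_sum]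
      _ ≤ ∑ i, ∑ j, ((if G.Adj i j then (d i)⁻¹ ^ 2 else 0) +
            if G.Adj i j then (d j)⁻¹ ^ 2 else 0) :=
        sum_le_sum fun i _ => sum_le_sum fun j _ => hamgm i j
      _ = 2 * ∑ i, (d i)⁻¹ := by simp only [sum_add_distrib, hswap, hrow]; ring
  linarith

variable [DecidableEq V] {G : SimpleGraph V} [DecidableRel G.Adj]

lemma nLap_apply (i j : V) :
    nLap G i j = (√(G.degree i : ℝ))⁻¹ *
      ((if i = j then (G.degree i : ℝ) else 0) - if G.Adj i j then 1 else 0) *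
      (√(G.degree j : ℝ))⁻¹ := by
  simp only [nLap, mul_apply, diagonal_apply, Matrix.sub_apply, adjMatrix_apply, one_div, ite_mul,
    mul_ite, zero_mul, mul_zero, sum_ite_eq, sum_ite_eq', mem_univ, if_true]

lemma nLap_apply_mul_apply_swap (hdeg : ∀ v, 0 < G.degree v) (i j : V) :
    nLap G i j * nLap G j i =
      (if i = j then 1 else 0) + if G.Adj i j then ((G.degree i : ℝ) * G.degree j)⁻¹ else 0 := by
  have hsq : ∀ v, (√(G.degree v : ℝ))⁻¹ * (√(G.degree v : ℝ))⁻¹ = (G.degree v : ℝ)⁻¹ := fun v => by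
    rw [← mul_inv, Real.mul_self_sqrt (Nat.cast_nonneg _)]
  rw [nLap_apply, nLap_apply]
  by_cases hij : i = j
  · subst hij
    have hd : (G.degree i : ℝ) ≠ 0 := by exact_mod_cast (hdeg i).ne'
    simp only [if_true, G.irrefl, if_false, sub_zero, add_zero]
    calc _ = ((G.degree i : ℝ) * ((√(G.degree i : ℝ))⁻¹ * (√(G.degree i : ℝ))⁻¹)) ^ 2 := by ring
      _ = 1 := by rw [hsq, mul_inv_cancel₀ hd, one_pow]
  · by_cases ha : G.Adj i j
    · simp only [if_neg hij, if_neg (Ne.symm hij), if_pos ha, if_pos ha.symm, zero_sub, zero_add]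
      calc _ = ((√(G.degree i : ℝ))⁻¹ * (√(G.degree i : ℝ))⁻¹) *
              ((√(G.degree j : ℝ))⁻¹ * (√(G.degree j : ℝ))⁻¹) := by ring
        _ = _ := by rw [hsq, hsq, mul_inv]
    · simp [hij, Ne.symm hij, ha]

lemma trace_nLap_mul_self (hdeg : ∀ v, 0 < G.degree v) :
    trace (nLap G * nLap G) = Fintype.card V +
      ∑ i, ∑ j, if G.Adj i j then ((G.degree i : ℝ) * G.degree j)⁻¹ else 0 := by
  simp only [trace, diag_apply, mul_apply, nLap_apply_mul_apply_swap hdeg, sum_add_distrib]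
  simp

end SimpleGraph

/-- Lower bound on the Rényi-2 entropy H₂(G) = -log Tr((𝓛/n)²) for a connected graph. -/
theorem stmt_6 (n : ℕ) (G : SimpleGraph (Fin n)) [DecidableRel G.Adj]
    (hconn : G.Connected) :
    -Real.log (Matrix.trace ((((n : ℝ)⁻¹) • nLap G) * (((n : ℝ)⁻¹) • nLap G))) ≥
      Real.log ((n : ℝ) ^ 2 / ((n : ℝ) + ∑ i, 1 / Real.sqrt (G.degree i : ℝ))) := by
  have hn : 0 < n := Fin.pos_iff_nonempty.2 hconn.nonempty
  rcases subsingleton_or_nontrivial (Fin n) with hsub | hnontriv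
  · -- The single vertex has degree `0`, so `nLap G = 0` and both sides are `log 1 = -log 0 = 0`.
    obtain rfl : n = 1 := by have := Fin.subsingleton_iff_le_one.1 hsub; omega
    simp [nLap]
  have hdeg : ∀ v, 0 < G.degree v := fun v => hconn.preconnected.degree_pos_of_nontrivial v
  rw [smul_mul_smul_comm, trace_smul, trace_nLap_mul_self hdeg, Fintype.card_fin, smul_eq_mul,
    ← Real.log_inv, ge_iff_le]
  set S := ∑ i, ∑ j, if G.Adj i j then ((G.degree i : ℝ) * G.degree j)⁻¹ else 0
  have hS0 : 0 ≤ S := sum_nonneg fun i _ => sum_nonneg fun j _ => by positivity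
  have hSle : S ≤ ∑ i, 1 / √(G.degree i : ℝ) :=
    (sum_adj_inv_degree_mul_le G).trans
      (sum_le_sum fun i _ => by simpa using inv_natCast_le_inv_sqrt_natCast (G.degree i))
  refine Real.log_le_log (by positivity) ?_
  rw [← sq, inv_pow, mul_inv, inv_inv, ← div_eq_mul_inv]
  gcongr
end

section
/- Let G be a simple connected graph on n vertices. Then the Von Neumann entropy and the Rényi-2 entropy of ρ = 𝓛/n satisfy 0 ≤ H(G) - H₂(G) ≤ (1/2) log 2. -/
/-! The eigenvalues `λᵢ` of `ρ = 𝓛/n` form a probability vector (`trace 𝓛 = n`) with `λᵢ ≤ 2/n`,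
since `2 - 𝓛 = D^{-1/2} (D + A) D^{-1/2}` and the signless Laplacian `D + A = B Bᵀ` (`B` the
incidence matrix) is positive semidefinite. `H₂ ≤ H` is Jensen's inequality for `log` with weights
`λᵢ`. For the upper bound put `yᵢ = n λᵢ ∈ [0, 2]`: as `y ↦ y²/2 - y log y` is increasing (its
derivative is `y - 1 - log y ≥ 0`), averaging gives `n ∑ λᵢ² / 2 - log n + H ≤ 2 - 2 log 2`, and
`log t ≤ t - 1` at `t = n ∑ λᵢ² / 2` turns this into `H - H₂ ≤ 1 - log 2 < (1/2) log 2`. -/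

open Real BigOperators Finset Matrix SimpleGraph

lemma sq_div_two_add_negMulLog_le {y : ℝ} (hy₀ : 0 ≤ y) (hy₂ : y ≤ 2) :
    y ^ 2 / 2 + negMulLog y ≤ 2 - 2 * log 2 := by
  have hmono : MonotoneOn (fun y : ℝ => y ^ 2 / 2 + negMulLog y) (Set.Ici 0) := by
    refine monotoneOn_of_deriv_nonneg (convex_Ici 0)
      ((continuous_pow 2 |>.div_const 2).add continuous_negMulLog).continuousOn ?_ ?_
    · rw [interior_Ici]
      exact ((differentiable_pow 2).div_const 2).differentiableOn.add
        (differentiableOn_negMulLog.mono fun y hy => ne_of_gt hy)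
    · intro y hy
      rw [interior_Ici] at hy
      have hderiv : HasDerivAt (fun y : ℝ => y ^ 2 / 2 + negMulLog y) (y - log y - 1) y := by
        refine (((hasDerivAt_pow 2 y).div_const 2).add
          (hasDerivAt_negMulLog (ne_of_gt hy))).congr_deriv ?_
        push_cast
        ring
      rw [hderiv.deriv]
      linarith [log_le_sub_one_of_pos hy]
  have := hmono hy₀ (by norm_num : (0:ℝ) ≤ 2) hy₂
  simp only [negMulLog] at this ⊢
  linarith

lemma mul_log_le_mul_log_add {x y : ℝ} (hx : 0 ≤ x) (hy : 0 < y) :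
    x * log x ≤ x * log y + x * (x / y - 1) := by
  obtain rfl | hx := hx.eq_or_lt
  · simp
  have := log_le_sub_one_of_pos (div_pos hx hy)
  rw [log_div hx.ne' hy.ne'] at this
  nlinarith

section Entropy

variable {ι : Type*} [Fintype ι]

noncomputable def shannonEntropy (p : ι → ℝ) : ℝ := ∑ i, negMulLog (p i)

/-- The Rényi entropy of order 2. -/
noncomputable def collisionEntropy (p : ι → ℝ) : ℝ := -log (∑ i, p i ^ 2)

variable {p : ι → ℝ}

lemma sum_sq_pos_of_sum_eq_one (hsum : ∑ i, p i = 1) : 0 < ∑ i, p i ^ 2 := by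
  obtain ⟨i, hi⟩ : ∃ i, p i ≠ 0 := by
    by_contra! h
    simp [h] at hsum
  exact sum_pos' (fun i _ => sq_nonneg (p i)) ⟨i, mem_univ i, by positivity⟩

lemma collisionEntropy_le_shannonEntropy (hp : ∀ i, 0 ≤ p i) (hsum : ∑ i, p i = 1) :
    collisionEntropy p ≤ shannonEntropy p := by
  set s := ∑ i, p i ^ 2
  have hs : 0 < s := sum_sq_pos_of_sum_eq_one hsum
  have key : ∑ i, p i * log (p i) ≤ ∑ i, (p i * log s + (p i ^ 2 / s - p i)) :=
    sum_le_sum fun i _ => by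
      have := mul_log_le_mul_log_add (hp i) hs
      linarith [show p i * (p i / s - 1) = p i ^ 2 / s - p i by ring]
  rw [sum_add_distrib, sum_sub_distrib, ← sum_mul, ← sum_div, hsum, div_self hs.ne'] at key
  simp only [collisionEntropy, shannonEntropy, negMulLog, neg_mul, sum_neg_distrib]
  linarith

lemma shannonEntropy_le_collisionEntropy_add (hp : ∀ i, 0 ≤ p i) (hsum : ∑ i, p i = 1)
    (hle : ∀ i, p i ≤ 2 / Fintype.card ι) :
    shannonEntropy p ≤ collisionEntropy p + (1 - log 2) := by
  set N : ℝ := (Fintype.card ι : ℝ)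
  set s := ∑ i, p i ^ 2
  have hs : 0 < s := sum_sq_pos_of_sum_eq_one hsum
  have hN : 0 < N := by
    have : Nonempty ι := by
      by_contra! h
      simp at hsum
    exact Nat.cast_pos.mpr Fintype.card_pos
  have key : ∑ i, ((N * p i) ^ 2 / 2 + negMulLog (N * p i)) ≤ ∑ _i : ι, (2 - 2 * log 2) :=
    sum_le_sum fun i _ => sq_div_two_add_negMulLog_le (by have := hp i; positivity) <| by
      have := hle i
      rwa [le_div_iff₀' hN] at this
  have hsum_eq : ∑ i, ((N * p i) ^ 2 / 2 + negMulLog (N * p i))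
      = N * (N * s / 2 - log N + shannonEntropy p) := by
    simp only [negMulLog_mul, shannonEntropy, sum_add_distrib, ← sum_mul, ← mul_sum, mul_pow,
      ← sum_div, hsum]
    simp only [negMulLog]
    ring
  have htangent := log_le_sub_one_of_pos (show 0 < N * s / 2 by positivity)
  rw [log_div (by positivity) two_ne_zero, log_mul hN.ne' hs.ne'] at htangent
  rw [hsum_eq, sum_const, card_univ, nsmul_eq_mul] at key
  have := le_of_mul_le_mul_left key hN
  simp only [collisionEntropy]
  linarith

end Entropy

namespace Matrix.IsHermitian

open scoped ComplexOrder

variable {𝕜 n : Type*} [RCLike 𝕜] [Fintype n] [DecidableEq n] {A : Matrix n n 𝕜}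

lemma trace_mul_self_eq_sum_sq (hA : A.IsHermitian) :
    (A * A).trace = ∑ i, (hA.eigenvalues i : 𝕜) ^ 2 := by
  conv_lhs => rw [hA.spectral_theorem, ← map_mul, Unitary.conjStarAlgAut_apply, trace_mul_cycle,
    Unitary.coe_star_mul_self, one_mul, diagonal_mul_diagonal, trace_diagonal]
  simp [sq]

lemma eigenvalues_le_of_posSemidef (hA : A.IsHermitian) {c : ℝ}
    (h : (c • (1 : Matrix n n 𝕜) - A).PosSemidef) (i : n) : hA.eigenvalues i ≤ c := by
  set v := ⇑(hA.eigenvectorBasis i)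
  have hv : star v ⬝ᵥ v = 1 := by
    rw [dotProduct_comm, ← EuclideanSpace.inner_eq_star_dotProduct, inner_self_eq_norm_sq_to_K,
      hA.eigenvectorBasis.orthonormal.1 i]
    simp
  have := h.dotProduct_mulVec_nonneg v
  rw [sub_mulVec, smul_mulVec, one_mulVec, dotProduct_sub, dotProduct_smul, hv] at this
  rw [hA.eigenvalues_eq i]
  have := (RCLike.nonneg_iff.mp this).1
  rwa [map_sub, RCLike.smul_re, RCLike.one_re, mul_one, sub_nonneg] at this

end Matrix.IsHermitian

namespace SimpleGraph

variable {V : Type*} [Fintype V] [DecidableEq V] (G : SimpleGraph V) [DecidableRel G.Adj]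

lemma posSemidef_degMatrix_add_adjMatrix {R : Type*} [CommRing R] [PartialOrder R] [StarRing R]
    [StarOrderedRing R] [TrivialStar R] : (G.degMatrix R + G.adjMatrix R).PosSemidef := by
  convert posSemidef_self_mul_conjTranspose (G.incMatrix R)
  rw [conjTranspose_eq_transpose_of_trivial, incMatrix_mul_transpose]
  ext v w
  by_cases h : v = w
  · subst h; simp [degMatrix]
  · by_cases hadj : G.Adj v w <;> simp [degMatrix, h, hadj]

noncomputable def invSqrtDegMatrix : Matrix V V ℝ := diagonal fun v => 1 / √(G.degree v : ℝ)

lemma nLap_eq : nLap G = G.invSqrtDegMatrix * G.lapMatrix ℝ * G.invSqrtDegMatrix := rfl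

lemma invSqrtDegMatrix_mul_degMatrix_mul (hdeg : ∀ v, 0 < G.degree v) :
    G.invSqrtDegMatrix * G.degMatrix ℝ * G.invSqrtDegMatrix = 1 := by
  rw [invSqrtDegMatrix, degMatrix, diagonal_mul_diagonal, diagonal_mul_diagonal, ← diagonal_one]
  congr 1
  ext v
  have hd : (0 : ℝ) < G.degree v := by exact_mod_cast hdeg v
  field_simp
  rw [sq_sqrt hd.le]

lemma nLap_eq_one_sub (hdeg : ∀ v, 0 < G.degree v) :
    nLap G = 1 - G.invSqrtDegMatrix * G.adjMatrix ℝ * G.invSqrtDegMatrix := by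
  rw [nLap_eq, lapMatrix, mul_sub, sub_mul, invSqrtDegMatrix_mul_degMatrix_mul G hdeg]

lemma trace_nLap (hdeg : ∀ v, 0 < G.degree v) : (nLap G).trace = Fintype.card V := by
  rw [nLap_eq_one_sub G hdeg, trace_sub, trace_one, sub_eq_self]
  refine sum_eq_zero fun v _ => ?_
  rw [diag_apply, invSqrtDegMatrix, mul_diagonal, diagonal_mul]
  simp

lemma posSemidef_nLap : (nLap G).PosSemidef := by
  simpa [nLap_eq, invSqrtDegMatrix] using
    (posSemidef_lapMatrix ℝ G).mul_mul_conjTranspose_same G.invSqrtDegMatrix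

lemma posSemidef_two_smul_one_sub_nLap (hdeg : ∀ v, 0 < G.degree v) :
    ((2 : ℝ) • 1 - nLap G).PosSemidef := by
  have : (2 : ℝ) • 1 - nLap G =
      G.invSqrtDegMatrix * (G.degMatrix ℝ + G.adjMatrix ℝ) * G.invSqrtDegMatrix := by
    rw [nLap_eq_one_sub G hdeg, mul_add, add_mul, invSqrtDegMatrix_mul_degMatrix_mul G hdeg,
      two_smul]
    abel
  simpa [this, invSqrtDegMatrix] using
    (posSemidef_degMatrix_add_adjMatrix G).mul_mul_conjTranspose_same G.invSqrtDegMatrix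

/-- All degrees vanish, and `1 / √0 = 0` makes `invSqrtDegMatrix` zero. -/
lemma nLap_eq_zero_of_subsingleton [Subsingleton V] : nLap G = 0 := by
  have : G.invSqrtDegMatrix = 0 := by simp [invSqrtDegMatrix]
  rw [nLap_eq, this, mul_zero]

variable {c : ℝ} (hρ : (c • nLap G).IsHermitian)
include hρ

lemma eigenvalues_smul_nLap_nonneg (hc : 0 ≤ c) (i : V) : 0 ≤ hρ.eigenvalues i :=
  ((posSemidef_nLap G).smul hc).eigenvalues_nonneg i

lemma sum_eigenvalues_smul_nLap (hdeg : ∀ v, 0 < G.degree v) :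
    ∑ i, hρ.eigenvalues i = c * Fintype.card V := by
  simpa [trace_nLap G hdeg] using hρ.trace_eq_sum_eigenvalues.symm

lemma eigenvalues_smul_nLap_le (hdeg : ∀ v, 0 < G.degree v) (hc : 0 ≤ c) (i : V) :
    hρ.eigenvalues i ≤ 2 * c := by
  refine hρ.eigenvalues_le_of_posSemidef ?_ i
  have := (posSemidef_two_smul_one_sub_nLap G hdeg).smul hc
  rwa [smul_sub, smul_smul, mul_comm] at this

end SimpleGraph

/-- For a connected graph, 0 ≤ H(G) - H₂(G) ≤ (1/2) log 2, where H is the Von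
Neumann entropy and H₂ the Rényi-2 entropy of ρ = 𝓛/n. -/
theorem stmt_15 (n : ℕ) (G : SimpleGraph (Fin n)) [DecidableRel G.Adj]
    (hconn : G.Connected) (hρ : (((n : ℝ)⁻¹) • nLap G).IsHermitian) :
    0 ≤ (-∑ i, hρ.eigenvalues i * Real.log (hρ.eigenvalues i)) -
        (-Real.log (Matrix.trace ((((n : ℝ)⁻¹) • nLap G) * (((n : ℝ)⁻¹) • nLap G)))) ∧
    (-∑ i, hρ.eigenvalues i * Real.log (hρ.eigenvalues i)) -
        (-Real.log (Matrix.trace ((((n : ℝ)⁻¹) • nLap G) * (((n : ℝ)⁻¹) • nLap G)))) ≤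
      (1 / 2) * Real.log 2 := by
  have hshannon : -∑ i, hρ.eigenvalues i * log (hρ.eigenvalues i) =
      shannonEntropy hρ.eigenvalues := by
    simp [shannonEntropy, negMulLog]
  have hcollision : -log (((n : ℝ)⁻¹ • nLap G) * ((n : ℝ)⁻¹ • nLap G)).trace =
      collisionEntropy hρ.eigenvalues := by
    rw [hρ.trace_mul_self_eq_sum_sq]
    simp [collisionEntropy]
  rw [hshannon, hcollision]
  obtain hn | hn := le_or_gt n 1
  · have : Subsingleton (Fin n) := Fin.subsingleton_iff_le_one.mpr hn
    have hzero : hρ.eigenvalues = 0 :=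
      hρ.eigenvalues_eq_zero_iff.mpr (by simp [nLap_eq_zero_of_subsingleton])
    simp only [shannonEntropy, collisionEntropy, hzero]
    simpa using log_nonneg one_le_two
  have : Nontrivial (Fin n) := Fin.nontrivial_iff_two_le.mpr hn
  have hdeg : ∀ v, 0 < G.degree v := fun v => hconn.preconnected.degree_pos_of_nontrivial v
  have hc : (0 : ℝ) ≤ (n : ℝ)⁻¹ := by positivity
  have hp := G.eigenvalues_smul_nLap_nonneg hρ hc
  have hsum : ∑ i, hρ.eigenvalues i = 1 := by
    rw [G.sum_eigenvalues_smul_nLap hρ hdeg, Fintype.card_fin]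
    field_simp
  have hle : ∀ i, hρ.eigenvalues i ≤ 2 / Fintype.card (Fin n) := fun i => by
    simpa [div_eq_mul_inv] using G.eigenvalues_smul_nLap_le hρ hdeg hc i
  refine ⟨sub_nonneg.mpr (collisionEntropy_le_shannonEntropy hp hsum), ?_⟩
  linarith [shannonEntropy_le_collisionEntropy_add hp hsum hle, log_two_gt_d9]
end

section
/- The Von Neumann entropy of the star graph K_{1,n-1} under the symmetric normalized Laplacian equals log n - (2/n) log 2, and the difference log(n-1) - (log n - (2/n) log 2) tends to 0 as n → ∞; i.e., the star graph asymptotically achieves the maximum entropy log(n-1). -/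
open Real BigOperators Finset Matrix SimpleGraph

/-!
For the complete bipartite graph `K_{p,q}` with `n = p + q` vertices, `ρ = 𝓛 / n = a (1 - B)`
with `a = 1 / n` and `B = A / √(pq)`. Since `A³ = pq A`, we get `B³ = B`, so `ρ` is annihilated
by `X (X - a) (X - 2a)` and its eigenvalues lie in `{0, a, 2a}`. On that set `x log x` agrees with
the quadratic `(log a - log 2) x + (log 2 / a) x²`, so the entropy only depends on
`tr ρ = 1` and `tr ρ² = (n + 2) / n²`. The star graph is the case `p = 1`.
-/

namespace Matrix.IsHermitian

variable {𝕜 n : Type*} [RCLike 𝕜] [Fintype n] [DecidableEq n] {A : Matrix n n 𝕜}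

lemma trace_cfc (hA : A.IsHermitian) (f : ℝ → ℝ) :
    (cfc f A).trace = ∑ i, (f (hA.eigenvalues i) : 𝕜) := by
  have hU := (Matrix.mem_unitaryGroup_iff').mp hA.eigenvectorUnitary.2
  rw [hA.cfc_eq, IsHermitian.cfc, Unitary.conjStarAlgAut_apply, trace_mul_cycle, hU, one_mul,
    trace_diagonal]
  rfl

lemma trace_pow_eq_sum_eigenvalues_pow (hA : A.IsHermitian) (k : ℕ) :
    (A ^ k).trace = ∑ i, (hA.eigenvalues i : 𝕜) ^ k := by
  simp [← cfc_pow_id (R := ℝ) A k hA.isSelfAdjoint, hA.trace_cfc]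

open Polynomial in
lemma isRoot_eigenvalues_of_aeval_eq_zero (hA : A.IsHermitian) {p : ℝ[X]}
    (hp : aeval A p = 0) (i : n) : p.IsRoot (hA.eigenvalues i) := by
  have : Nonempty n := ⟨i⟩
  have := spectrum.subset_polynomial_aeval A p ⟨_, hA.eigenvalues_mem_spectrum_real i, rfl⟩
  rwa [hp, spectrum.zero_eq, Set.mem_singleton_iff] at this

end Matrix.IsHermitian

/-- The quadratic is the interpolant of `x log x` at the nodes `0, a, 2a`. -/
lemma Real.mul_log_eq_of_mul_sub_mul_sub_eq_zero {a x : ℝ} (ha : 0 < a)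
    (hx : x * (x - a) * (x - 2 * a) = 0) :
    x * log x = (log a - log 2) * x + log 2 / a * x ^ 2 := by
  rcases mul_eq_zero.1 hx with hx | hx
  · rcases mul_eq_zero.1 hx with rfl | hx
    · simp
    · obtain rfl : x = a := by linarith
      field_simp
      ring
  · obtain rfl : x = 2 * a := by linarith
    rw [log_mul two_ne_zero ha.ne']
    field_simp
    ring

open Polynomial in
lemma Matrix.IsHermitian.sum_eigenvalues_mul_log_eq {n : Type*} [Fintype n] [DecidableEq n]
    {ρ : Matrix n n ℝ} (hρ : ρ.IsHermitian) {a : ℝ} (ha : 0 < a)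
    (hcubic : ρ * (ρ - a • 1) * (ρ - (2 * a) • 1) = 0) :
    ∑ i, hρ.eigenvalues i * log (hρ.eigenvalues i) =
      (log a - log 2) * ρ.trace + log 2 / a * (ρ ^ 2).trace := by
  have hroot : ∀ i, (X * (X - C a) * (X - C (2 * a))).IsRoot (hρ.eigenvalues i) :=
    hρ.isRoot_eigenvalues_of_aeval_eq_zero <| by
      simpa only [aeval_mul, aeval_sub, aeval_X, aeval_C, Algebra.algebraMap_eq_smul_one]
        using hcubic
  simp only [hρ.trace_eq_sum_eigenvalues, hρ.trace_pow_eq_sum_eigenvalues_pow, mul_sum]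
  rw [← sum_add_distrib]
  refine sum_congr rfl fun i _ => Real.mul_log_eq_of_mul_sub_mul_sub_eq_zero ha ?_
  simpa using hroot i

lemma smul_one_sub_mul_sub_mul_sub_eq_zero {R A : Type*} [CommRing R] [Ring A] [Algebra R A]
    {B : A} (hB : B ^ 3 = B) (a : R) :
    a • (1 - B) * (a • (1 - B) - a • 1) * (a • (1 - B) - (2 * a) • 1) = 0 := by
  have h1 : a • (1 - B) - a • 1 = -a • B := by module
  have h2 : a • (1 - B) - (2 * a) • 1 = -a • (1 + B) := by module
  rw [h1, h2, smul_mul_smul, smul_mul_smul]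
  have : (1 - B) * B * (1 + B) = B - B ^ 3 := by noncomm_ring
  rw [this, hB, sub_self, smul_zero]

lemma inv_sqrt_sq_mul_self {d : ℝ} (hd : 0 < d) : (√d)⁻¹ ^ 2 * d = 1 := by
  rw [inv_pow, sq_sqrt hd.le, inv_mul_cancel₀ hd.ne']

section CompleteBipartite

variable {V W : Type*} [Fintype V] [Fintype W] [DecidableRel (completeBipartiteGraph V W).Adj]

lemma degree_completeBipartiteGraph_inl (v : V) :
    (completeBipartiteGraph V W).degree (Sum.inl v) = Fintype.card W := by
  have : (completeBipartiteGraph V W).neighborFinset (Sum.inl v) = univ.map .inr := by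
    ext (v' | w) <;> simp
  rw [← card_neighborFinset_eq_degree, this, card_map, card_univ]

lemma degree_completeBipartiteGraph_inr (w : W) :
    (completeBipartiteGraph V W).degree (Sum.inr w) = Fintype.card V := by
  have : (completeBipartiteGraph V W).neighborFinset (Sum.inr w) = univ.map .inl := by
    ext (v | w') <;> simp
  rw [← card_neighborFinset_eq_degree, this, card_map, card_univ]

variable [DecidableEq V] [DecidableEq W]

lemma adjMatrix_completeBipartiteGraph_pow_three :
    (completeBipartiteGraph V W).adjMatrix ℝ ^ 3 =
      (Fintype.card V * Fintype.card W : ℝ) • (completeBipartiteGraph V W).adjMatrix ℝ := by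
  ext (v | w) (v' | w') <;>
    simp [pow_three, mul_apply, Fintype.sum_sum_type, adjMatrix_apply, mul_comm]

lemma trace_adjMatrix_completeBipartiteGraph_sq :
    ((completeBipartiteGraph V W).adjMatrix ℝ ^ 2).trace =
      2 * Fintype.card V * Fintype.card W := by
  rw [trace, Fintype.sum_sum_type]
  simp only [sq, Matrix.diag, adjMatrix_mul_self_apply_self, degree_completeBipartiteGraph_inl,
    degree_completeBipartiteGraph_inr, sum_const, card_univ, nsmul_eq_mul]
  ring

variable [Nonempty V] [Nonempty W]

lemma nLap_completeBipartiteGraph :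
    nLap (completeBipartiteGraph V W) =
      1 - (√(Fintype.card V * Fintype.card W))⁻¹ • (completeBipartiteGraph V W).adjMatrix ℝ := by
  have hV : (0 : ℝ) < Fintype.card V := by exact_mod_cast Fintype.card_pos
  have hW : (0 : ℝ) < Fintype.card W := by exact_mod_cast Fintype.card_pos
  ext (v | w) (v' | w') <;>
    simp [nLap, mul_diagonal, diagonal_mul, diagonal_apply, one_apply, adjMatrix_apply,
      degree_completeBipartiteGraph_inl, degree_completeBipartiteGraph_inr, sqrt_mul hV.le]
  · exact if_congr Iff.rfl (by linear_combination inv_sqrt_sq_mul_self hW) rfl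
  · ring
  · exact if_congr Iff.rfl (by linear_combination inv_sqrt_sq_mul_self hV) rfl

lemma normalizedAdj_completeBipartiteGraph_pow_three :
    ((√(Fintype.card V * Fintype.card W))⁻¹ • (completeBipartiteGraph V W).adjMatrix ℝ) ^ 3 =
      (√(Fintype.card V * Fintype.card W))⁻¹ • (completeBipartiteGraph V W).adjMatrix ℝ := by
  have hpq : (0 : ℝ) < Fintype.card V * Fintype.card W := by positivity
  rw [smul_pow, adjMatrix_completeBipartiteGraph_pow_three, smul_smul, pow_succ', mul_assoc,
    inv_sqrt_sq_mul_self hpq, mul_one]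

lemma trace_nLap_completeBipartiteGraph :
    (nLap (completeBipartiteGraph V W)).trace = Fintype.card V + Fintype.card W := by
  simp [nLap_completeBipartiteGraph]

lemma trace_nLap_completeBipartiteGraph_sq :
    (nLap (completeBipartiteGraph V W) ^ 2).trace = Fintype.card V + Fintype.card W + 2 := by
  have hpq : (0 : ℝ) < Fintype.card V * Fintype.card W := by positivity
  rw [nLap_completeBipartiteGraph, sq, sub_mul, mul_sub, mul_sub, one_mul, mul_one, one_mul, ← sq,
    smul_pow]
  simp only [trace_sub, trace_one, trace_smul, trace_adjMatrix,
    trace_adjMatrix_completeBipartiteGraph_sq, Fintype.card_sum, smul_eq_mul]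
  push_cast
  linear_combination 2 * inv_sqrt_sq_mul_self hpq

lemma smul_nLap_completeBipartiteGraph_mul_sub_mul_sub_eq_zero (a : ℝ) :
    a • nLap (completeBipartiteGraph V W) * (a • nLap (completeBipartiteGraph V W) - a • 1) *
      (a • nLap (completeBipartiteGraph V W) - (2 * a) • 1) = 0 := by
  rw [nLap_completeBipartiteGraph]
  exact smul_one_sub_mul_sub_mul_sub_eq_zero normalizedAdj_completeBipartiteGraph_pow_three a

lemma vonNeumannEntropy_completeBipartiteGraph {N : ℝ}
    (hN : (Fintype.card V + Fintype.card W : ℝ) = N)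
    (hρ : (N⁻¹ • nLap (completeBipartiteGraph V W)).IsHermitian) :
    -∑ i, hρ.eigenvalues i * log (hρ.eigenvalues i) = log N - 2 / N * log 2 := by
  have hN0 : 0 < N := hN ▸ by positivity
  rw [hρ.sum_eigenvalues_mul_log_eq (inv_pos.2 hN0)
      (smul_nLap_completeBipartiteGraph_mul_sub_mul_sub_eq_zero _),
    trace_smul, smul_pow, trace_smul, trace_nLap_completeBipartiteGraph,
    trace_nLap_completeBipartiteGraph_sq, hN, log_inv, smul_eq_mul, smul_eq_mul]
  field_simp
  ring

end CompleteBipartite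

/-- The Von Neumann entropy of the star graph K_{1,n-1} equals
log n - (2/n) log 2, and the gap to the maximum entropy log(n-1) tends to 0 as
n → ∞. -/
theorem stmt_19 (n : ℕ) (hn : 2 ≤ n)
    [DecidableRel (completeBipartiteGraph (Fin 1) (Fin (n - 1))).Adj]
    (hH : (((n : ℝ)⁻¹) • nLap (completeBipartiteGraph (Fin 1) (Fin (n - 1)))).IsHermitian) :
    (-∑ i, hH.eigenvalues i * Real.log (hH.eigenvalues i) =
      Real.log (n : ℝ) - (2 / (n : ℝ)) * Real.log 2) ∧
    Filter.Tendsto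
      (fun m : ℕ => Real.log ((m : ℝ) - 1) - (Real.log (m : ℝ) - (2 / (m : ℝ)) * Real.log 2))
      Filter.atTop (nhds 0) := by
  have : Nonempty (Fin (n - 1)) := ⟨⟨0, by omega⟩⟩
  have hcard : (Fintype.card (Fin 1) + Fintype.card (Fin (n - 1)) : ℝ) = n := by
    simp [Nat.cast_sub (by omega : 1 ≤ n)]
  refine ⟨vonNeumannEntropy_completeBipartiteGraph hcard hH, ?_⟩
  have hlog := (tendsto_log_comp_add_sub_log (-1)).comp tendsto_natCast_atTop_atTop
  have hdiv := (tendsto_const_div_atTop_nhds_zero_nat (2 : ℝ)).mul_const (log 2)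
  convert hlog.add hdiv using 2 <;> simp [sub_eq_add_neg]
  ring
end
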